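/- Let K be a field of characteristic p > 0 with derivation δ, F = Const(δ), and suppose δ on K has minimum p-polynomial g(t) = t^{p^e} + a_1 t^{p^{e−1}} + ... + a_e t ∈ F[t]. Then K is a purely inseparable extension of F of exponent ≤ 1, i.e., K^p ⊆ F ⊆ K, and [K:F] = p^e. -/

import Mathlib

/-- The field of constants `F = Const(δ) = {a ∈ K | δ(a) = 0}` of a derivation `δ`
on a field `K`. -/
def constSubfield (K : Type*) [Field K] (δ : K → K)
    (hadd : ∀ a b : K, δ (a + b) = δ a + δ b)
    (hmul : ∀ a b : K, δ (a * b) = a * δ b + δ a * b) : Subfield K where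
  carrier := {a : K | δ a = 0}
  mul_mem' := by
    intro a b ha hb
    simp only [Set.mem_setOf_eq] at *
    rw [hmul, ha, hb, mul_zero, zero_mul, add_zero]
  one_mem' := by
    have h : δ 1 = δ 1 + δ 1 := by
      conv_lhs => rw [show (1 : K) = 1 * 1 by ring]
      rw [hmul]; ring
    have := add_right_cancel (a := δ 1) (b := δ 1) (c := 0)
    simp only [Set.mem_setOf_eq]
    linear_combination -h
  add_mem' := by
    intro a b ha hb
    simp only [Set.mem_setOf_eq] at *
    rw [hadd, ha, hb, add_zero]
  zero_mem' := by
    have h : δ 0 = δ 0 + δ 0 := by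
      conv_lhs => rw [show (0 : K) = 0 + 0 by ring]
      rw [hadd]
    simp only [Set.mem_setOf_eq]
    linear_combination -h
  neg_mem' := by
    intro a ha
    simp only [Set.mem_setOf_eq] at *
    have h0 : δ 0 = δ 0 + δ 0 := by
      conv_lhs => rw [show (0 : K) = 0 + 0 by ring]
      rw [hadd]
    have h0' : δ 0 = 0 := by linear_combination -h0
    have h : δ (a + -a) = δ a + δ (-a) := hadd a (-a)
    rw [add_neg_cancel, h0', ha, zero_add] at h
    exact h.symm
  inv_mem' := by
    intro a ha
    simp only [Set.mem_setOf_eq] at *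
    rcases eq_or_ne a 0 with rfl | h
    · rwa [inv_zero]
    · have h1 : δ 1 = δ 1 + δ 1 := by
        conv_lhs => rw [show (1 : K) = 1 * 1 by ring]
        rw [hmul]; ring
      have h1' : δ 1 = 0 := by linear_combination -h1
      have h2 : δ (a * a⁻¹) = a * δ a⁻¹ + δ a * a⁻¹ := hmul a a⁻¹
      rw [mul_inv_cancel₀ h, h1', ha, zero_mul, add_zero] at h2
      have h3 : a * δ a⁻¹ = 0 := h2.symm
      rcases mul_eq_zero.mp h3 with h4 | h4
      · exact absurd h4 h
      · exact h4


open Module Finset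


section DerivAux

variable {K : Type*} [Field K]

lemma deriv_zero' {δ : K → K} (hadd : ∀ a b : K, δ (a + b) = δ a + δ b) : δ 0 = 0 := by
  have h := hadd 0 0
  rw [add_zero] at h
  linear_combination -h

lemma derivNegAux {δ : K → K} (hadd : ∀ a b : K, δ (a + b) = δ a + δ b) (a : K) :
    δ (-a) = -δ a := by
  have h := hadd a (-a)
  rw [add_neg_cancel, deriv_zero' hadd] at h
  linear_combination -h

lemma deriv_one' {δ : K → K} (hmul : ∀ a b : K, δ (a * b) = a * δ b + δ a * b) : δ 1 = 0 := by
  have h := hmul 1 1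
  rw [mul_one] at h
  linear_combination -h

lemma deriv_sum' {δ : K → K} (hadd : ∀ a b : K, δ (a + b) = δ a + δ b)
    {ι : Type*} (s : Finset ι) (f : ι → K) :
    δ (∑ i ∈ s, f i) = ∑ i ∈ s, δ (f i) :=
  map_sum (AddMonoidHom.mk' δ hadd) f s

lemma deriv_natCast' {δ : K → K} (hadd : ∀ a b : K, δ (a + b) = δ a + δ b)
    (hmul : ∀ a b : K, δ (a * b) = a * δ b + δ a * b) (n : ℕ) : δ (n : K) = 0 := by
  induction n with
  | zero => simpa using deriv_zero' hadd
  | succ n ih =>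
    push_cast
    rw [hadd, ih, deriv_one' hmul, add_zero]

lemma iter_add' {δ : K → K} (hadd : ∀ a b : K, δ (a + b) = δ a + δ b) (n : ℕ) (a b : K) :
    δ^[n] (a + b) = δ^[n] a + δ^[n] b := by
  induction n generalizing a b with
  | zero => simp
  | succ n ih => simp only [Function.iterate_succ_apply, hadd, ih]

lemma iter_zero' {δ : K → K} (hadd : ∀ a b : K, δ (a + b) = δ a + δ b) (n : ℕ) :
    δ^[n] 0 = 0 := by
  induction n with
  | zero => rfl
  | succ n ih => rw [Function.iterate_succ_apply, deriv_zero' hadd, ih]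

lemma iter_leibniz' {δ : K → K} (hadd : ∀ a b : K, δ (a + b) = δ a + δ b)
    (hmul : ∀ a b : K, δ (a * b) = a * δ b + δ a * b) (n : ℕ) (a b : K) :
    δ^[n] (a * b) = ∑ k ∈ range (n + 1), (n.choose k : K) * (δ^[k] a * δ^[n - k] b) := by
  induction n with
  | zero => simp
  | succ n ih =>
    rw [Function.iterate_succ_apply', ih, deriv_sum' hadd]
    have hterm : ∀ k, δ ((n.choose k : K) * (δ^[k] a * δ^[n - k] b)) =
        (n.choose k : K) * (δ^[k] a * δ^[n - k + 1] b)
        + (n.choose k : K) * (δ^[k + 1] a * δ^[n - k] b) := by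
      intro k
      have e1 : δ (δ^[n - k] b) = δ^[n - k + 1] b := (Function.iterate_succ_apply' δ (n - k) b).symm
      have e2 : δ (δ^[k] a) = δ^[k + 1] a := (Function.iterate_succ_apply' δ k a).symm
      rw [hmul, hmul, deriv_natCast' hadd hmul, e1, e2]
      ring
    rw [Finset.sum_congr rfl fun k _ => hterm k, Finset.sum_add_distrib]
    -- now combine using Pascal's rule
    have h1 : ∀ k ∈ range (n + 1), (n.choose k : K) * (δ^[k] a * δ^[n - k + 1] b)
        = (n.choose k : K) * (δ^[k] a * δ^[n + 1 - k] b) := by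
      intro k hk
      rw [mem_range] at hk
      rw [show n - k + 1 = n + 1 - k by omega]
    rw [Finset.sum_congr rfl h1]
    set A : ℕ → K := fun k => δ^[k] a with hA
    set B : ℕ → K := fun k => δ^[k] b with hB
    show (∑ k ∈ range (n + 1), (n.choose k : K) * (A k * B (n + 1 - k)))
        + (∑ k ∈ range (n + 1), (n.choose k : K) * (A (k + 1) * B (n - k)))
        = ∑ k ∈ range (n + 2), ((n+1).choose k : K) * (A k * B (n + 1 - k))
    rw [Finset.sum_range_succ' (fun k => ((n+1).choose k : K) * (A k * B (n + 1 - k)))]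
    rw [Finset.sum_range_succ' (fun k => ((n).choose k : K) * (A k * B (n + 1 - k)))]
    have h2 : ∀ k ∈ range (n + 1), ((n+1).choose (k+1) : K) * (A (k+1) * B (n + 1 - (k+1)))
        = (n.choose k : K) * (A (k+1) * B (n - k))
          + (n.choose (k+1) : K) * (A (k+1) * B (n - k)) := by
      intro k hk
      have : n + 1 - (k + 1) = n - k := by omega
      rw [this, Nat.choose_succ_succ, Nat.cast_add]
      ring
    rw [Finset.sum_congr rfl h2, Finset.sum_add_distrib]
    have h3 : ∑ k ∈ range (n + 1), (n.choose (k+1) : K) * (A (k+1) * B (n - k))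
        = ∑ k ∈ range n, (n.choose (k+1) : K) * (A (k+1) * B (n + 1 - (k+1))) := by
      rw [Finset.sum_range_succ]
      have : (n.choose (n+1) : K) = 0 := by
        rw [Nat.choose_eq_zero_of_lt (by omega), Nat.cast_zero]
      rw [this, zero_mul, add_zero]
      refine Finset.sum_congr rfl fun k hk => ?_
      rw [mem_range] at hk
      rw [show n - k = n + 1 - (k + 1) by omega]
    rw [h3]
    simp only [Nat.choose_zero_right, Nat.cast_one, one_mul]
    ring

lemma iter_p_mul' {δ : K → K} (p : ℕ) (hp : p.Prime) [CharP K p]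
    (hadd : ∀ a b : K, δ (a + b) = δ a + δ b)
    (hmul : ∀ a b : K, δ (a * b) = a * δ b + δ a * b) (a b : K) :
    δ^[p] (a * b) = a * δ^[p] b + δ^[p] a * b := by
  rw [iter_leibniz' hadd hmul]
  have hsub : ({0, p} : Finset ℕ) ⊆ range (p + 1) := by
    intro k hk
    simp only [mem_insert, mem_singleton] at hk
    rcases hk with rfl | rfl <;> simp [mem_range] <;> omega
  rw [← Finset.sum_subset hsub]
  · rw [Finset.sum_pair hp.ne_zero.symm ]
    simp only [Function.iterate_zero, id_eq, Nat.sub_zero, Nat.choose_zero_right,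
      Nat.choose_self, Nat.cast_one, one_mul, Nat.sub_self]
  · intro k hk hk'
    simp only [mem_insert, mem_singleton, not_or, mem_range] at hk hk'
    have : (p.choose k : K) = 0 := by
      rw [CharP.cast_eq_zero_iff K p]
      exact hp.dvd_choose_self hk'.1 (by omega)
    rw [this, zero_mul]

/-- `δ^[p^i]` is again a derivation. -/
lemma iter_ppow_derivation {δ : K → K} (p : ℕ) (hp : p.Prime) [CharP K p]
    (hadd : ∀ a b : K, δ (a + b) = δ a + δ b)
    (hmul : ∀ a b : K, δ (a * b) = a * δ b + δ a * b) (i : ℕ) :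
    (∀ a b : K, δ^[p^i] (a + b) = δ^[p^i] a + δ^[p^i] b) ∧
    (∀ a b : K, δ^[p^i] (a * b) = a * δ^[p^i] b + δ^[p^i] a * b) := by
  induction i with
  | zero => simpa using ⟨hadd, hmul⟩
  | succ i ih =>
    have hiter : δ^[p^(i+1)] = (δ^[p^i])^[p] := by
      rw [pow_succ, Function.iterate_mul]
    rw [hiter]
    exact ⟨iter_add' ih.1 p, iter_p_mul' p hp ih.1 ih.2⟩

end DerivAux

section LemA
variable {K : Type*} [Field K]
open scoped Classical

/-- Wronskian-type lemma: if `x i` are linearly independent over the constants of `δ`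
(expressed coefficient-wise), then the families of iterated derivatives are
linearly independent over `K`. -/
lemma wronskian_indep {δ : K → K}
    (hadd : ∀ a b : K, δ (a + b) = δ a + δ b)
    (hmul : ∀ a b : K, δ (a * b) = a * δ b + δ a * b)
    {ι : Type*} [Fintype ι] [DecidableEq ι] (x : ι → K)
    (hx : ∀ d : ι → K, (∀ i, δ (d i) = 0) → ∑ i, d i * x i = 0 → ∀ i, d i = 0) :
    ∀ c : ι → K, (∀ j : ℕ, ∑ i, c i * δ^[j] (x i) = 0) → ∀ i, c i = 0 := by
  suffices H : ∀ N (c : ι → K), (univ.filter fun i => c i ≠ 0).card ≤ N →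
      (∀ j : ℕ, ∑ i, c i * δ^[j] (x i) = 0) → ∀ i, c i = 0 by
    exact fun c h => H _ c le_rfl h
  intro N
  induction N with
  | zero =>
    intro c hcard _ i
    by_contra hne
    have : i ∈ univ.filter fun i => c i ≠ 0 := by simp [hne]
    have := Finset.card_pos.mpr ⟨i, this⟩
    omega
  | succ N ih =>
    intro c hcard hrel i
    by_contra hne
    -- there is a nonzero coefficient
    have hi0 : c i ≠ 0 := hne
    set d : ι → K := fun k => (c i)⁻¹ * c k with hd
    have hdrel : ∀ j : ℕ, ∑ k, d k * δ^[j] (x k) = 0 := by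
      intro j
      have : ∑ k, d k * δ^[j] (x k) = (c i)⁻¹ * ∑ k, c k * δ^[j] (x k) := by
        rw [Finset.mul_sum]
        exact Finset.sum_congr rfl fun k _ => by ring
      rw [this, hrel j, mul_zero]
    set d' : ι → K := fun k => δ (d k) with hd'
    have hd'rel : ∀ j : ℕ, ∑ k, d' k * δ^[j] (x k) = 0 := by
      intro j
      have h1 : δ (∑ k, d k * δ^[j] (x k)) = 0 := by rw [hdrel j, deriv_zero' hadd]
      rw [deriv_sum' hadd] at h1
      have h2 : ∀ k, δ (d k * δ^[j] (x k)) =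
          d k * δ^[j+1] (x k) + d' k * δ^[j] (x k) := by
        intro k
        rw [hmul, ← Function.iterate_succ_apply' δ j (x k)]
      rw [Finset.sum_congr rfl fun k _ => h2 k, Finset.sum_add_distrib, hdrel (j+1),
        zero_add] at h1
      exact h1
    -- the support of d' is strictly smaller
    have hsub : (univ.filter fun k => d' k ≠ 0) ⊆
        (univ.filter fun k => c k ≠ 0).erase i := by
      intro k hk
      simp only [mem_filter, mem_univ, true_and] at hk
      rw [Finset.mem_erase]
      constructor
      · rintro rfl
        apply hk
        have h1 : d k = 1 := by rw [hd]; exact inv_mul_cancel₀ hi0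
        show δ (d k) = 0
        rw [h1, deriv_one' hmul]
      · simp only [mem_filter, mem_univ, true_and]
        intro hc
        apply hk
        show δ (d k) = 0
        have : d k = 0 := by rw [hd]; simp [hc]
        rw [this, deriv_zero' hadd]
    have hmem : i ∈ univ.filter fun k => c k ≠ 0 := by simp [hi0]
    have hcard' : (univ.filter fun k => d' k ≠ 0).card ≤ N := by
      have h1 := Finset.card_le_card hsub
      have h2 := Finset.card_erase_of_mem hmem
      omega
    have hd'0 := ih d' hcard' hd'rel
    -- so all the `d k` are constants
    have hdc : ∀ k, δ (d k) = 0 := hd'0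
    have hsum : ∑ k, d k * x k = 0 := by
      have := hdrel 0
      simpa using this
    have hdi := hx d hdc hsum i
    have : (c i)⁻¹ * c i = 0 := hdi
    rw [inv_mul_cancel₀ hi0] at this
    exact one_ne_zero this

end LemA

section LemC
universe u
open IntermediateField Polynomial

lemma purely_insep_deriv_bound :
    ∀ (m : ℕ) (F K : Type u) [Field F] [Field K] [Algebra F K],
      ∀ (p : ℕ), p.Prime → ∀ [CharP K p] [FiniteDimensional F K],
      Module.finrank F K = m →
      (∀ x : K, x ^ p ∈ Set.range (algebraMap F K)) →
      ∀ (e' : ℕ) (D : Fin e' → (K → K)),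
        (∀ i, ∀ a b : K, D i (a + b) = D i a + D i b) →
        (∀ i, ∀ a b : K, D i (a * b) = a * D i b + D i a * b) →
        (∀ i, ∀ x : K, x ∈ Set.range (algebraMap F K) → D i x = 0) →
        (∀ c : Fin e' → K, (∀ x, ∑ i, c i * D i x = 0) → ∀ i, c i = 0) →
        p ^ e' ≤ Module.finrank F K := by
  intro m
  induction m using Nat.strong_induction_on with
  | _ m IH =>
  intro F K iF iK iA p hp iC iFD hm hKp e' D hDadd hDmul hD0 hind
  match e' with
  | 0 => rw [pow_zero]; exact Module.finrank_pos
  | (e'' + 1) =>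
    haveI := Fact.mk hp
    -- `D 0 ≠ 0`
    have hb : ∃ b : K, D 0 b ≠ 0 := by
      by_contra h
      push_neg at h
      have h1 := hind (fun j => if j = 0 then 1 else 0) ?_ 0
      · simp at h1
      · intro x
        have h2 : ∀ j : Fin (e''+1), (if j = 0 then (1:K) else 0) * D j x
            = if j = 0 then D j x else 0 := by
          intro j; split <;> simp
        rw [Finset.sum_congr rfl fun j _ => h2 j,
          Finset.sum_ite_eq' Finset.univ 0 (fun j => D j x)]
        simp [h x]
    obtain ⟨b, hub⟩ := hb
    have hbF : b ∉ Set.range (algebraMap F K) := fun h => hub (hD0 0 b h)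
    obtain ⟨β, hβ⟩ := hKp b
    haveI : CharP F p := (algebraMap F K).charP (algebraMap F K).injective p
    have hirr : Irreducible (Polynomial.X ^ p - Polynomial.C β) := by
      apply X_pow_sub_C_irreducible_of_prime hp
      intro r hr
      apply hbF
      refine ⟨r, ?_⟩
      have hpow : (algebraMap F K r) ^ p = b ^ p := by rw [← map_pow, hr, hβ]
      exact frobenius_inj K p hpow
    have hmonic : (Polynomial.X ^ p - Polynomial.C β).Monic :=
      Polynomial.monic_X_pow_sub_C β hp.ne_zero
    have hroot : Polynomial.aeval b (Polynomial.X ^ p - Polynomial.C β) = 0 := by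
      rw [map_sub, map_pow, Polynomial.aeval_X, Polynomial.aeval_C, hβ, sub_self]
    have hminb : minpoly F b = Polynomial.X ^ p - Polynomial.C β :=
      (minpoly.eq_of_irreducible_of_monic hirr hroot hmonic).symm
    have hint : IsIntegral F b := ⟨_, hmonic, by rw [← Polynomial.aeval_def]; exact hroot⟩
    set F' : IntermediateField F K := F⟮b⟯ with hF'
    have hdeg : Module.finrank F F' = p := by
      rw [IntermediateField.adjoin.finrank hint, hminb, Polynomial.natDegree_X_pow_sub_C]
    have htower : Module.finrank F F' * Module.finrank F' K = m := by
      rw [Module.finrank_mul_finrank]; exact hm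
    have hm' : Module.finrank F' K < m := by
      have hpos : 0 < Module.finrank (F' : IntermediateField F K) K := Module.finrank_pos
      calc Module.finrank F' K < 2 * Module.finrank F' K := by omega
        _ ≤ p * Module.finrank F' K := Nat.mul_le_mul_right _ hp.two_le
        _ = m := by rw [← htower, hdeg]
    have hrangeF' : Set.range (algebraMap F' K) = (F' : Set K) := by
      ext z
      constructor
      · rintro ⟨w, rfl⟩; exact w.2
      · intro hz; exact ⟨⟨z, hz⟩, rfl⟩
    -- any derivation vanishing on `F` and at `b` vanishes on `F' = F⟮b⟯`
    have hvanish : ∀ (Dd : K → K) (hDa : ∀ a b : K, Dd (a+b) = Dd a + Dd b)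
        (hDm : ∀ a b : K, Dd (a*b) = a * Dd b + Dd a * b),
        (∀ x ∈ Set.range (algebraMap F K), Dd x = 0) → Dd b = 0 →
        ∀ z ∈ F', Dd z = 0 := by
      intro Dd hDa hDm h0 hb0 z hz
      have hFS : ∀ x : F, algebraMap F K x ∈ constSubfield K Dd hDa hDm :=
        fun x => h0 _ ⟨x, rfl⟩
      have hle : F' ≤ (constSubfield K Dd hDa hDm).toIntermediateField hFS := by
        rw [hF']
        apply IntermediateField.adjoin_le_iff.mpr
        intro w hw
        rcases hw with rfl
        exact hb0
      exact hle hz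
    set u := D 0 b with hu
    set D'' : Fin e'' → (K → K) :=
      fun i x => D i.succ x - (D i.succ b / u) * D 0 x with hD''
    have hD''add : ∀ i, ∀ a b' : K, D'' i (a + b') = D'' i a + D'' i b' := by
      intro i a b'
      simp only [hD'']
      rw [hDadd, hDadd]
      ring
    have hD''mul : ∀ i, ∀ a b' : K, D'' i (a * b') = a * D'' i b' + D'' i a * b' := by
      intro i a b'
      simp only [hD'']
      rw [hDmul, hDmul]
      ring
    have hD''b : ∀ i, D'' i b = 0 := by
      intro i
      simp only [hD'']
      rw [div_mul_cancel₀ _ hub]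
      ring
    have hD''0 : ∀ i, ∀ x : K, x ∈ Set.range (algebraMap F' K) → D'' i x = 0 := by
      intro i x hx
      rw [hrangeF'] at hx
      refine hvanish (D'' i) (hD''add i) (hD''mul i) ?_ (hD''b i) x hx
      intro z hz
      simp only [hD'']
      rw [hD0 i.succ z hz, hD0 0 z hz, mul_zero, sub_zero]
    have hind'' : ∀ c : Fin e'' → K, (∀ x, ∑ i, c i * D'' i x = 0) → ∀ i, c i = 0 := by
      intro c hc
      set c0 : K := -∑ i, c i * (D i.succ b / u) with hc0
      have h1 : ∀ x, ∑ j : Fin (e''+1), (Fin.cons c0 c : Fin (e''+1) → K) j * D j x = 0 := by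
        intro x
        rw [Fin.sum_univ_succ]
        simp only [Fin.cons_zero, Fin.cons_succ]
        have h2 : ∀ i : Fin e'', c i * D i.succ x =
            c i * D'' i x + (c i * (D i.succ b / u)) * D 0 x := by
          intro i
          simp only [hD'']
          ring
        rw [Finset.sum_congr rfl fun i _ => h2 i, Finset.sum_add_distrib, hc x, zero_add,
          ← Finset.sum_mul, hc0]
        ring
      intro i
      have h3 := hind (Fin.cons c0 c) h1 i.succ
      rwa [Fin.cons_succ] at h3
    have hIH : p ^ e'' ≤ Module.finrank F' K := by
      refine IH (Module.finrank F' K) hm' F' K p hp rfl ?_ e'' D'' hD''add hD''mul hD''0 hind''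
      intro x
      obtain ⟨γ, hγ⟩ := hKp x
      refine ⟨algebraMap F F' γ, ?_⟩
      rw [← hγ]
      exact (IsScalarTower.algebraMap_apply F F' K γ).symm
    calc p ^ (e'' + 1) = p * p ^ e'' := by ring
      _ ≤ p * Module.finrank F' K := Nat.mul_le_mul_left p hIH
      _ = m := by rw [← htower, hdeg]
      _ = Module.finrank F K := hm.symm

end LemC

section LemDE
variable {K : Type*} [Field K]

/-- From a nontrivial linear relation among `δ^[p^i]` extract a monic relation
expressing some `δ^[p^r]` in terms of lower ones. -/
lemma extract_top_relation {δ : K → K} (p : ℕ) :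
    ∀ (m : ℕ) (d : Fin m → K), (∀ x, ∑ i, d i * δ^[p^(i:ℕ)] x = 0) → (∃ i, d i ≠ 0) →
    ∃ r, r < m ∧ ∃ c : Fin r → K, ∀ x, δ^[p^r] x = ∑ i : Fin r, c i * δ^[p^(i:ℕ)] x := by
  intro m
  induction m with
  | zero =>
    rintro d _ ⟨i, _⟩
    exact i.elim0
  | succ m ih =>
    intro d hrel hne
    by_cases hl : d (Fin.last m) = 0
    · have hrel' : ∀ x, ∑ i : Fin m, d i.castSucc * δ^[p^(i:ℕ)] x = 0 := by
        intro x
        have h := hrel x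
        rw [Fin.sum_univ_castSucc, hl, zero_mul, add_zero] at h
        rw [← h]
        exact Finset.sum_congr rfl fun i _ => by rw [Fin.coe_castSucc]
      have hne' : ∃ i : Fin m, d i.castSucc ≠ 0 := by
        obtain ⟨i, hi⟩ := hne
        have hne_last : i ≠ Fin.last m := fun h => hi (h ▸ hl)
        obtain ⟨j, hj⟩ := Fin.exists_castSucc_eq.mpr hne_last
        exact ⟨j, hj ▸ hi⟩
      obtain ⟨r, hr, hc⟩ := ih (fun i => d i.castSucc) hrel' hne'
      exact ⟨r, hr.trans (Nat.lt_succ_self m), hc⟩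
    · refine ⟨m, Nat.lt_succ_self m, fun i => -(d i.castSucc) / d (Fin.last m), ?_⟩
      intro x
      have h := hrel x
      rw [Fin.sum_univ_castSucc] at h
      have h2 : ∑ i : Fin m, d i.castSucc * δ^[p^(i:ℕ)] x
          = -(d (Fin.last m) * δ^[p^m] x) := by
        simp only [Fin.val_last, Fin.coe_castSucc] at h
        linear_combination h
      have h4 : ∑ i : Fin m, -(d i.castSucc) / d (Fin.last m) * δ^[p^(i:ℕ)] x
          = (d (Fin.last m))⁻¹ * ∑ i : Fin m, -(d i.castSucc * δ^[p^(i:ℕ)] x) := by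
        rw [Finset.mul_sum]
        refine Finset.sum_congr rfl fun i _ => ?_
        field_simp
      rw [h4, Finset.sum_neg_distrib, h2, neg_neg, ← mul_assoc, inv_mul_cancel₀ hl, one_mul]

/-- Minimality: there is no relation `δ^[p^r] = ∑ c i δ^[p^i]` with `r < e`. -/
lemma no_lower_relation {δ : K → K} (p e : ℕ) (hp : p.Prime)
    (hadd : ∀ a b : K, δ (a + b) = δ a + δ b)
    (hmul : ∀ a b : K, δ (a * b) = a * δ b + δ a * b)
    (hmin : ∀ e' : ℕ, e' < e → ∀ b : Fin e' → K, (∀ i, δ (b i) = 0) →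
      ¬ ∀ x : K, δ^[p ^ e'] x + ∑ i : Fin e', b i * δ^[p ^ (e' - 1 - (i : ℕ))] x = 0) :
    ∀ r, r < e → ∀ c : Fin r → K, (∀ x, δ^[p^r] x = ∑ i, c i * δ^[p^(i:ℕ)] x) → False := by
  intro r
  induction r using Nat.strong_induction_on with
  | _ r IH =>
  intro hre c hrel
  by_cases hz : ∀ i, δ (c i) = 0
  · refine hmin r hre (fun i => -(c i.rev)) (fun i => by rw [derivNegAux hadd, hz, neg_zero]) ?_
    intro x
    have hrev : ∑ i : Fin r, -(c i.rev) * δ^[p ^ (r - 1 - (i:ℕ))] x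
        = -∑ j : Fin r, c j * δ^[p^(j:ℕ)] x := by
      rw [← Finset.sum_neg_distrib]
      refine Fintype.sum_equiv Fin.revPerm _ _ fun i => ?_
      have h1 : ((Fin.revPerm i : Fin r) : ℕ) = r - 1 - (i : ℕ) := by
        have := i.isLt
        simp only [Fin.revPerm_apply, Fin.val_rev]
        omega
      rw [h1, Fin.revPerm_apply]
      ring
    rw [hrev, hrel x, add_neg_cancel]
  · push_neg at hz
    have hcomm : ∀ x, ∑ i : Fin r, δ (c i) * δ^[p^(i:ℕ)] x = 0 := by
      intro x
      have h1 : δ (δ^[p^r] x) = δ^[p^r] (δ x) := by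
        rw [← Function.iterate_succ_apply' δ (p^r) x, Function.iterate_succ_apply]
      have h2 := hrel (δ x)
      have h3 : δ (δ^[p^r] x) = δ (∑ i : Fin r, c i * δ^[p^(i:ℕ)] x) := by rw [hrel x]
      rw [deriv_sum' hadd] at h3
      have h4 : ∀ i : Fin r, δ (c i * δ^[p^(i:ℕ)] x)
          = c i * δ^[p^(i:ℕ)] (δ x) + δ (c i) * δ^[p^(i:ℕ)] x := by
        intro i
        rw [hmul, ← Function.iterate_succ_apply' δ (p^(i:ℕ)) x,
          Function.iterate_succ_apply]
      rw [Finset.sum_congr rfl fun i _ => h4 i, Finset.sum_add_distrib, h1, h2] at h3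
      linear_combination -h3
    obtain ⟨i0, hi0⟩ := hz
    obtain ⟨r', hr', c', hrel'⟩ :=
      extract_top_relation p r (fun i => δ (c i)) hcomm ⟨i0, hi0⟩
    exact IH r' hr' (hr'.trans hre) c' hrel'

end LemDE

/-- if `δ` is a derivation on a field `K` of characteristic `p` whose
minimum `p`-polynomial over `F = Const(δ)` is
`g(t) = t^{p^e} + a_1 t^{p^{e-1}} + ⋯ + a_e t`, then `K` is purely inseparable over
`F` of exponent at most one, i.e. `K^p ⊆ F`, and `[K:F] = p^e`. -/
theorem purely_inseparable_of_min_poly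
    (K : Type*) [Field K] (p : ℕ) (hp : p.Prime) [CharP K p] (δ : K → K)
    (hadd : ∀ a b : K, δ (a + b) = δ a + δ b)
    (hmul : ∀ a b : K, δ (a * b) = a * δ b + δ a * b)
    (e : ℕ) (he : 0 < e) (a : Fin e → K) (ha : ∀ i, δ (a i) = 0)
    -- `g(δ) = 0` as an additive operator on `K`:
    (hg : ∀ x : K, δ^[p ^ e] x + ∑ i : Fin e, a i * δ^[p ^ (e - 1 - (i : ℕ))] x = 0)
    -- no monic `p`-polynomial of lower degree with constant coefficients kills `δ`:
    (hmin : ∀ e' : ℕ, e' < e → ∀ b : Fin e' → K, (∀ i, δ (b i) = 0) →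
      ¬ ∀ x : K, δ^[p ^ e'] x + ∑ i : Fin e', b i * δ^[p ^ (e' - 1 - (i : ℕ))] x = 0) :
    (∀ x : K, x ^ p ∈ constSubfield K δ hadd hmul) ∧
    Module.finrank (constSubfield K δ hadd hmul) K = p ^ e := by
  classical
  set F : Subfield K := constSubfield K δ hadd hmul with hF
  -- Part 1: `K^p ⊆ F`
  have hxp : ∀ x : K, x ^ p ∈ F := by
    intro x
    have hpow : ∀ n : ℕ, δ (x ^ (n + 1)) = ((n : K) + 1) * x ^ n * δ x := by
      intro n
      induction n with
      | zero => simp [pow_one]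
      | succ n ih =>
        have hx2 : x ^ (n + 2) = x * x ^ (n + 1) := by ring
        rw [hx2, hmul, ih]
        push_cast
        ring
    show δ (x ^ p) = 0
    obtain ⟨q, hq⟩ : ∃ q, p = q + 1 := ⟨p - 1, by have := hp.pos; omega⟩
    rw [hq, hpow q]
    have hcast : ((q : K) + 1) = ((p : ℕ) : K) := by rw [hq]; push_cast; ring
    rw [hcast, CharP.cast_eq_zero K p, zero_mul, zero_mul]
  -- iterates of δ kill constants
  have hiterF : ∀ (k : ℕ), 0 < k → ∀ z : K, δ z = 0 → δ^[k] z = 0 := by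
    intro k hk z hz
    obtain ⟨l, rfl⟩ : ∃ l, k = l + 1 := ⟨k - 1, by omega⟩
    rw [Function.iterate_succ_apply, hz, iter_zero' hadd]
  -- The span of the iterates δ^[t], t < p^e, is stable
  set V : Submodule K (K → K) :=
    Submodule.span K (Set.range (fun t : Fin (p ^ e) => (fun x => δ^[(t : ℕ)] x))) with hV
  have hgen : ∀ t : Fin (p ^ e), (fun x => δ^[(t : ℕ)] x) ∈ V :=
    fun t => Submodule.subset_span ⟨t, rfl⟩
  have hppow_lt : ∀ i : Fin e, p ^ (e - 1 - (i : ℕ)) < p ^ e := by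
    intro i
    exact pow_lt_pow_right₀ hp.one_lt (by omega)
  have hVn : (fun x => δ^[p ^ e] x) ∈ V := by
    have hfun : (fun x => δ^[p ^ e] x)
        = ∑ i : Fin e, (-(a i)) • (fun x => δ^[p ^ (e - 1 - (i : ℕ))] x) := by
      funext x
      simp only [Finset.sum_apply, Pi.smul_apply, smul_eq_mul]
      have hsum : ∑ i : Fin e, -a i * δ^[p ^ (e - 1 - (i : ℕ))] x
          = -∑ i : Fin e, a i * δ^[p ^ (e - 1 - (i : ℕ))] x := by
        rw [← Finset.sum_neg_distrib]
        exact Finset.sum_congr rfl fun i _ => by ring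
      rw [hsum]
      linear_combination hg x
    rw [hfun]
    exact Submodule.sum_mem _ fun i _ =>
      Submodule.smul_mem _ _ (hgen ⟨p ^ (e - 1 - (i : ℕ)), hppow_lt i⟩)
  have hclosed : ∀ f ∈ V, (fun x => f (δ x)) ∈ V := by
    intro f hf
    let Φ : (K → K) →ₗ[K] (K → K) :=
      { toFun := fun f => fun x => f (δ x)
        map_add' := fun f g => rfl
        map_smul' := fun c f => rfl }
    have hle : V ≤ V.comap Φ := by
      rw [hV]
      apply Submodule.span_le.mpr
      rintro _ ⟨t, rfl⟩
      simp only [SetLike.mem_coe, Submodule.mem_comap]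
      show (fun x => δ^[(t : ℕ)] (δ x)) ∈ V
      have hfun : (fun x => δ^[(t : ℕ)] (δ x)) = fun x => δ^[(t : ℕ) + 1] x := by
        funext x
        rw [Function.iterate_succ_apply]
      rw [hfun]
      rcases lt_or_eq_of_le (Nat.lt_iff_add_one_le.mp t.isLt) with hlt | heq
      · exact hgen ⟨(t : ℕ) + 1, hlt⟩
      · rw [heq]
        exact hVn
    exact hle hf
  have hiter_mem : ∀ j : ℕ, (fun x => δ^[j] x) ∈ V := by
    intro j
    induction j with
    | zero => exact hgen ⟨0, pow_pos hp.pos e⟩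
    | succ j ih =>
      have h1 := hclosed _ ih
      have hfun : (fun x => δ^[j] (δ x)) = fun x => δ^[j + 1] x := by
        funext x
        rw [Function.iterate_succ_apply]
      rwa [hfun] at h1
  -- Upper bound: finrank F K ≤ p ^ e
  have hcard : ∀ s : Finset K, (LinearIndependent F fun i : s => (i : K)) →
      s.card ≤ p ^ e := by
    intro s hs
    have hx : ∀ d : ↥s → K, (∀ i, δ (d i) = 0) →
        ∑ i, d i * (i : K) = 0 → ∀ i, d i = 0 := by
      intro d hd hsum i
      have hsum' : ∑ j : s, (⟨d j, hd j⟩ : F) • (j : K) = 0 := by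
        have heq : ∀ j : s, (⟨d j, hd j⟩ : F) • (j : K) = d j * (j : K) := fun j => rfl
        rw [Finset.sum_congr rfl fun j _ => heq j]
        exact hsum
      have hcoef := (Fintype.linearIndependent_iff.mp hs) (fun j => (⟨d j, hd j⟩ : F)) hsum' i
      exact congrArg Subtype.val hcoef
    have hw := wronskian_indep hadd hmul (fun i : s => (i : K)) hx
    have hli : LinearIndependent K
        (fun i : s => (fun t : Fin (p ^ e) => δ^[(t : ℕ)] (i : K))) := by
      rw [Fintype.linearIndependent_iff]
      intro c hc i
      refine hw c ?_ i
      intro j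
      let ψ : (K → K) →ₗ[K] K :=
        { toFun := fun f => ∑ k : s, c k * f (k : K)
          map_add' := by
            intro f g
            simp only [Pi.add_apply, mul_add]
            rw [Finset.sum_add_distrib]
          map_smul' := by
            intro r f
            simp only [Pi.smul_apply, smul_eq_mul, RingHom.id_apply]
            rw [Finset.mul_sum]
            exact Finset.sum_congr rfl fun k _ => by ring }
      have hψ : V ≤ LinearMap.ker ψ := by
        rw [hV]
        apply Submodule.span_le.mpr
        rintro _ ⟨t, rfl⟩
        simp only [SetLike.mem_coe, LinearMap.mem_ker]
        show ∑ k : s, c k * δ^[(t : ℕ)] (k : K) = 0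
        have := congrFun hc t
        simpa using this
      have := hψ (hiter_mem j)
      exact LinearMap.mem_ker.mp this
    have hcardle := hli.fintype_card_le_finrank
    rwa [Module.finrank_fin_fun, Fintype.card_coe] at hcardle
  have hrank : Module.rank F K ≤ ((p ^ e : ℕ) : Cardinal) := rank_le hcard
  haveI hfd : FiniteDimensional F K :=
    IsNoetherian.iff_fg.mp (IsNoetherian.iff_rank_lt_aleph0.mpr
      (hrank.trans_lt (Cardinal.nat_lt_aleph0 _)))
  have hfr_le : Module.finrank F K ≤ p ^ e := Module.finrank_le_of_rank_le hrank
  refine ⟨hxp, le_antisymm hfr_le ?_⟩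
  -- Lower bound
  by_cases hind : ∀ c : Fin e → K, (∀ x, ∑ i, c i * δ^[p ^ (i : ℕ)] x = 0) → ∀ i, c i = 0
  · -- the derivations δ^[p^i] are independent: apply the structural bound
    have hder := fun i : Fin e => iter_ppow_derivation p hp hadd hmul (i : ℕ)
    refine purely_insep_deriv_bound (Module.finrank F K) F K p hp rfl ?_ e
      (fun i => fun x => δ^[p ^ (i : ℕ)] x) (fun i => (hder i).1) (fun i => (hder i).2)
      ?_ hind
    · intro x
      exact ⟨⟨x ^ p, hxp x⟩, rfl⟩
    · intro i x hx
      obtain ⟨z, rfl⟩ := hx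
      exact hiterF _ (pow_pos hp.pos _) _ z.2
  · exfalso
    push_neg at hind
    obtain ⟨c, hcrel, i0, hci0⟩ := hind
    obtain ⟨r, hr, c', hrel'⟩ := extract_top_relation p e c hcrel ⟨i0, hci0⟩
    exact no_lower_relation p e hp hadd hmul hmin r hr c' hrel'
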